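/- arXiv:1402.3711 — 2 statements merged into one kernel-verified Lean document; each statement's English description precedes it below -/
import Mathlib

section
/- Let A be a C0(X)-algebra with base map φ_A : Prim(A) → X and extension φ_A^f : Fac(A) → X. For every x in the image of φ_A, one has I_x = ⋂{I ∈ Fac(A) : φ_A^f(I) = x}. Moreover, for I ∈ Fac(A) and x ∈ X, I ⊇ I_x if and only if φ_A^f(I) = x. -/
/-- Let `A` be a `C₀(X)`-algebra with base map `φA : Prim(A) → X` and
extension `φf : Fac(A) → X`.  For every `x` in the image of `φA`,
`I_x = ⋂ {I ∈ Fac(A) : φf I = x}`.  Moreover, for `I ∈ Fac(A)` and `x ∈ X`,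
`I ⊇ I_x` if and only if `φf I = x`.  Here `I_x = ⋂ {P ∈ Prim(A) : φA P = x}`. -/
theorem stmt_2 {A X PrimA FacA : Type*}
    [NonUnitalCStarAlgebra A]
    [TopologicalSpace X] [LocallyCompactSpace X] [T2Space X]
    [TopologicalSpace PrimA] [TopologicalSpace FacA]
    (primI : PrimA → TwoSidedIdeal A) (facI : FacA → TwoSidedIdeal A)
    (e : PrimA → FacA) (hec : Continuous e) (hei : Function.Injective e)
    (hdense : DenseRange e)
    (hcompat : ∀ p, facI (e p) = primI p)
    -- every factorial ideal is the kernel of its hull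
    (hkfac : ∀ I : FacA, facI I = sInf (primI '' {P | facI I ≤ primI P}))
    -- the topology on `Fac(A)` is the hull-kernel topology
    (htopFac : ∀ (S : Set FacA) (J : FacA), J ∈ closure S ↔ sInf (facI '' S) ≤ facI J)
    (φA : PrimA → X) (hφA : Continuous φA)
    -- `φf` is the unique continuous extension of `φA` to `Fac(A)`
    (φf : FacA → X) (hφfc : Continuous φf) (hext : ∀ p, φf (e p) = φA p) :
    (∀ x ∈ Set.range φA,
        sInf (primI '' {P | φA P = x}) = sInf (facI '' {I | φf I = x})) ∧
    (∀ (I : FacA) (x : X),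
        sInf (primI '' {P | φA P = x}) ≤ facI I ↔ φf I = x) := by

  -- Key lemma: if `P` is in the hull of `I`, then `φA P = φf I`.
  have L1 : ∀ (I : FacA) (P : PrimA), facI I ≤ primI P → φA P = φf I := by
    intro I P hIP
    have hmem : e P ∈ closure ({I} : Set FacA) := by
      rw [htopFac]
      simpa [hcompat] using hIP
    have h1 : φf (e P) ∈ φf '' closure ({I} : Set FacA) := Set.mem_image_of_mem _ hmem
    have h2 : φf (e P) ∈ closure (φf '' ({I} : Set FacA)) :=
      image_closure_subset_closure_image hφfc h1
    simp only [Set.image_singleton, closure_singleton, Set.mem_singleton_iff] at h2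
    rw [← hext P]
    exact h2
  -- Direction: `φf I = x → I_x ≤ facI I`.
  have Lle : ∀ (I : FacA) (x : X), φf I = x → sInf (primI '' {P | φA P = x}) ≤ facI I := by
    intro I x hx
    rw [hkfac I]
    apply le_sInf
    rintro b ⟨P, hP, rfl⟩
    exact sInf_le ⟨P, by rw [Set.mem_setOf_eq, L1 I P hP, hx], rfl⟩
  -- Direction: `I_x ≤ facI I → φf I = x`.
  have Lge : ∀ (I : FacA) (x : X), sInf (primI '' {P | φA P = x}) ≤ facI I → φf I = x := by
    intro I x h
    have hIcl : I ∈ closure (e '' {P | φA P = x}) := by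
      rw [htopFac]
      rwa [Set.image_image, show (fun P => facI (e P)) = fun P => primI P from
        funext fun P => hcompat P]
    have h1 : φf I ∈ closure (φf '' (e '' {P | φA P = x})) :=
      image_closure_subset_closure_image hφfc (Set.mem_image_of_mem _ hIcl)
    have hsub : φf '' (e '' {P | φA P = x}) ⊆ {x} := by
      rintro _ ⟨_, ⟨P, hP, rfl⟩, rfl⟩
      simpa [hext] using hP
    have h2 := closure_mono hsub h1
    rwa [closure_singleton, Set.mem_singleton_iff] at h2
  refine ⟨fun x _ => le_antisymm ?_ ?_, fun I x => ⟨Lge I x, Lle I x⟩⟩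
  · apply le_sInf
    rintro b ⟨I, hI, rfl⟩
    exact Lle I x hI
  · apply sInf_le_sInf
    rintro b ⟨P, hP, rfl⟩
    exact ⟨e P, by simp only [Set.mem_setOf_eq, hext]; exact hP, hcompat P⟩
end

section
/- Let (B, X, μ_B) be a C0(X)-algebra and ι : A → B a *-monomorphism with μ_B(f)ι(a) ∈ ι(A) for all f ∈ C0(X), a ∈ A, and let μ_A be the induced C0(X)-structure on A. For x ∈ X set I_x = μ_A({f : f(x)=0})A and J_x = μ_B({f : f(x)=0})B. Then ι(I_x) = J_x ∩ ι(A), and consequently ‖a + I_x‖ = ‖ι(a) + J_x‖ for all a ∈ A; in particular, if B is a continuous C0(X)-algebra then so is A. -/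
open scoped MultiplierAlgebra ZeroAtInfty
open Metric Filter

set_option maxHeartbeats 2000000

namespace Stmt4Aux

/-- Composition of a real function (vanishing at 0) with the norm of a `C₀` function. -/
noncomputable def nComp {X : Type*} [TopologicalSpace X] (f : C₀(X, ℂ)) (F : ℝ → ℝ)
    (hF : Continuous F) (hF0 : F 0 = 0) : C₀(X, ℂ) where
  toFun y := (F ‖f y‖ : ℂ)
  continuous_toFun := Complex.continuous_ofReal.comp (hF.comp (continuous_norm.comp f.continuous))
  zero_at_infty' := by
    have h1 : Filter.Tendsto (fun y => ‖f y‖) (Filter.cocompact X) (nhds 0) := by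
      simpa using f.zero_at_infty'.norm
    have h2 : Filter.Tendsto (fun y => F ‖f y‖) (Filter.cocompact X) (nhds 0) := by
      simpa [hF0, Function.comp_def] using (hF.tendsto 0).comp h1
    simpa [Function.comp_def] using (Complex.continuous_ofReal.tendsto 0).comp h2

@[simp] lemma nComp_apply {X : Type*} [TopologicalSpace X] (f : C₀(X, ℂ)) (F : ℝ → ℝ)
    (hF : Continuous F) (hF0 : F 0 = 0) (y : X) :
    nComp f F hF hF0 y = (F ‖f y‖ : ℂ) := rfl

lemma polyAux {u v e : ℝ} (hu : 0 ≤ u) (hv : 0 ≤ v) (he : 0 ≤ e) :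
    u * (v ^ 2 - e) * u ^ 2 ≤ v * ((u ^ 2 + e) * (u ^ 2 + v ^ 2)) := by
  nlinarith [mul_nonneg (mul_nonneg (mul_nonneg hu hu) hv) (sq_nonneg (u - v)),
    mul_nonneg (mul_nonneg (mul_nonneg (mul_nonneg hu hu) hu) hv) hv,
    mul_nonneg he (mul_nonneg (mul_nonneg hu hu) hv),
    mul_nonneg he (mul_nonneg (mul_nonneg hv hv) hv),
    mul_nonneg he (mul_nonneg (mul_nonneg hu hu) hu)]

lemma sqrtAux1 {s ε δ : ℝ} (hs : 0 ≤ s) (hε : 0 < ε) (hδ : 0 < δ) (hεδ : ε ≤ δ) :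
    |Real.sqrt s / (s + ε) - Real.sqrt s / (s + δ)| * s ≤ Real.sqrt δ := by
  have hsε : 0 < s + ε := by linarith
  have hsδ : 0 < s + δ := by linarith
  have hd : Real.sqrt s / (s + ε) - Real.sqrt s / (s + δ)
      = Real.sqrt s * (δ - ε) / ((s + ε) * (s + δ)) := by field_simp; ring
  have hnum : 0 ≤ Real.sqrt s * (δ - ε) := mul_nonneg (Real.sqrt_nonneg s) (by linarith)
  rw [hd, abs_of_nonneg (div_nonneg hnum (by positivity)), div_mul_eq_mul_div,
    div_le_iff₀ (by positivity)]
  have h1 := Real.sq_sqrt hs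
  have h2 := Real.sq_sqrt hδ.le
  have h3 := Real.sqrt_nonneg s
  have h4 := Real.sqrt_nonneg δ
  set u := Real.sqrt s with hu
  set v := Real.sqrt δ with hv
  rw [← h1, ← h2]
  have he2 : ε ≤ v ^ 2 := by rw [h2]; exact hεδ
  have := polyAux h3 h4 hε.le (u := u) (v := v) (e := ε)
  linarith [this]

lemma sqrtAux2 {s ε : ℝ} (hs : 0 ≤ s) (hε : 0 < ε) :
    |1 - Real.sqrt s * (Real.sqrt s / (s + ε))| * s ≤ ε := by
  have hsε : 0 < s + ε := by linarith
  have h1 : Real.sqrt s * (Real.sqrt s / (s + ε)) = s / (s + ε) := by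
    rw [mul_div_assoc', Real.mul_self_sqrt hs]
  have h2 : 1 - s / (s + ε) = ε / (s + ε) := by field_simp; ring
  rw [h1, h2, abs_of_nonneg (by positivity), div_mul_eq_mul_div, div_le_iff₀ hsε]
  nlinarith

lemma minAux {s δ : ℝ} (hs : 0 ≤ s) (hδ : 0 < δ) : |1 - min (s / δ) 1| * s ≤ δ := by
  rcases le_total (s / δ) 1 with h | h
  · rw [min_eq_left h, abs_of_nonneg (by linarith [div_nonneg hs hδ.le])]
    have hsδ : s ≤ δ := (div_le_one hδ).mp h
    have h0 : 0 ≤ s / δ := div_nonneg hs hδ.le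
    nlinarith [mul_nonneg h0 hs]
  · rw [min_eq_right h]
    simp [hδ.le]

lemma normOneSub {M : Type*} [CStarAlgebra M] (S : M) (h2 : ‖star S * S‖ ≤ 1) :
    ‖1 - star S * S‖ ≤ 1 := by
  letI := CStarAlgebra.spectralOrder M
  haveI := CStarAlgebra.spectralOrderedRing M
  have hT : (0 : M) ≤ star S * S := star_mul_self_nonneg S
  have hT1 : star S * S ≤ 1 := (CStarAlgebra.norm_le_one_iff_of_nonneg _ hT).mp h2
  have h0 : (0 : M) ≤ 1 - star S * S := sub_nonneg.mpr hT1
  exact (CStarAlgebra.norm_le_one_iff_of_nonneg _ h0).mpr (by simpa using hT)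

end Stmt4Aux

section Main

open Stmt4Aux

/-- Let `(B, X, μB)` be a `C₀(X)`-algebra and `ι : A → B` a
*-monomorphism with `μB(f) ι(a) ∈ ι(A)`, and let `μA` be the induced `C₀(X)`-structure on
`A` (so that `ι (μA(f) a) = μB(f) ι(a)`).  With `I_x = μA({f : f x = 0}) A` and
`J_x = μB({f : f x = 0}) B` one has `ι(I_x) = J_x ∩ ι(A)`, and consequently
`‖a + I_x‖ = ‖ι a + J_x‖` for all `a ∈ A`; in particular if `B` is a continuous
`C₀(X)`-algebra then so is `A` (continuity: the norm functions lie in `C₀(X, ℝ)`). -/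
theorem stmt_4 {X A B : Type*}
    [TopologicalSpace X] [LocallyCompactSpace X] [T2Space X]
    [NonUnitalCStarAlgebra A] [NonUnitalCStarAlgebra B]
    (μB : C₀(X, ℂ) →⋆ₙₐ[ℂ] 𝓜(ℂ, B))
    (hBcentral : ∀ f, μB f ∈ Set.center 𝓜(ℂ, B))
    (hBnondeg : ∀ b : B, ∃ (f : C₀(X, ℂ)) (c : B), (μB f).fst c = b)
    (ι : A →⋆ₙₐ[ℂ] B) (hι : Function.Injective ι)
    (μA : C₀(X, ℂ) →⋆ₙₐ[ℂ] 𝓜(ℂ, A))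
    (hAcentral : ∀ f, μA f ∈ Set.center 𝓜(ℂ, A))
    (hAnondeg : ∀ a : A, ∃ (f : C₀(X, ℂ)) (c : A), (μA f).fst c = a)
    (hmod : ∀ (f : C₀(X, ℂ)) (a : A), ι ((μA f).fst a) = (μB f).fst (ι a)) :
    let Ix : X → Set A := fun x => {c | ∃ (f : C₀(X, ℂ)) (a : A), f x = 0 ∧ (μA f).fst a = c}
    let Jx : X → Set B := fun x => {c | ∃ (f : C₀(X, ℂ)) (b : B), f x = 0 ∧ (μB f).fst b = c}
    (∀ x : X, ι '' Ix x = Jx x ∩ Set.range ι) ∧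
    (∀ (x : X) (a : A), Metric.infDist a (Ix x) = Metric.infDist (ι a) (Jx x)) ∧
    ((∀ b : B, ∃ g : C₀(X, ℝ), ∀ x, g x = Metric.infDist b (Jx x)) →
      ∀ a : A, ∃ g : C₀(X, ℝ), ∀ x, g x = Metric.infDist a (Ix x)) := by
  intro Ix Jx
  -- basic facts
  have hnι : ∀ z : A, ‖ι z‖ = ‖z‖ := fun z => NonUnitalStarAlgHom.norm_map ι hι z
  have hIne : ∀ x, (Ix x).Nonempty := fun x => ⟨0, 0, 0, by simp, by simp⟩
  have hJne : ∀ x, (Jx x).Nonempty := fun x => ⟨0, 0, 0, by simp, by simp⟩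
  have hC0 : ∀ (g : C₀(X, ℂ)) (M : ℝ), 0 ≤ M → (∀ y, ‖g y‖ ≤ M) → ‖g‖ ≤ M := by
    intro g M hM h
    rw [← ZeroAtInftyContinuousMap.norm_toBCF_eq_norm]
    exact (BoundedContinuousFunction.norm_le hM).mpr (by simpa using h)
  have happB : ∀ (g : C₀(X, ℂ)) (b : B), ‖(μB g).fst b‖ ≤ ‖g‖ * ‖b‖ := by
    intro g b
    calc ‖(μB g).fst b‖ ≤ ‖(μB g).fst‖ * ‖b‖ := (μB g).fst.le_opNorm b
      _ ≤ ‖g‖ * ‖b‖ := by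
          rw [DoubleCentralizer.norm_fst]
          exact mul_le_mul_of_nonneg_right (NonUnitalStarAlgHom.norm_apply_le μB g)
            (norm_nonneg b)
  have hmulB : ∀ (g₁ g₂ : C₀(X, ℂ)) (b : B),
      (μB (g₁ * g₂)).fst b = (μB g₁).fst ((μB g₂).fst b) := by
    intro g₁ g₂ b
    rw [map_mul, DoubleCentralizer.mul_fst, ContinuousLinearMap.mul_apply]
  have hmulA : ∀ (g₁ g₂ : C₀(X, ℂ)) (a : A),
      (μA (g₁ * g₂)).fst a = (μA g₁).fst ((μA g₂).fst a) := by
    intro g₁ g₂ a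
    rw [map_mul, DoubleCentralizer.mul_fst, ContinuousLinearMap.mul_apply]
  have hsubB : ∀ (g₁ g₂ : C₀(X, ℂ)) (b : B),
      (μB (g₁ - g₂)).fst b = (μB g₁).fst b - (μB g₂).fst b := by
    intro g₁ g₂ b
    rw [map_sub, DoubleCentralizer.sub_fst, ContinuousLinearMap.sub_apply]
  have hsubA : ∀ (g₁ g₂ : C₀(X, ℂ)) (a : A),
      (μA (g₁ - g₂)).fst a = (μA g₁).fst a - (μA g₂).fst a := by
    intro g₁ g₂ a
    rw [map_sub, DoubleCentralizer.sub_fst, ContinuousLinearMap.sub_apply]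
  -- the key backward inclusion
  have hback : ∀ (x : X) (a : A), ι a ∈ Jx x → a ∈ Ix x := by
    rintro x a ⟨f, c, hfx, hfc⟩
    have hεpos : ∀ n : ℕ, (0:ℝ) < 1/(n+1) := fun n => by positivity
    set θ : ℕ → C₀(X, ℂ) := fun n => nComp f (fun s => Real.sqrt s / (|s| + 1/(n+1)))
      (by
        apply Real.continuous_sqrt.div (continuous_abs.add continuous_const)
        intro s
        have := abs_nonneg s
        have := hεpos n
        exact (add_pos_of_nonneg_of_pos (abs_nonneg s) (hεpos n)).ne')
      (by simp) with hθ
    set h : C₀(X, ℂ) := nComp f Real.sqrt Real.continuous_sqrt Real.sqrt_zero with hh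
    -- pointwise description
    have hθy : ∀ (n : ℕ) (y : X),
        θ n y = ((Real.sqrt ‖f y‖ / (‖f y‖ + 1/(n+1)) : ℝ) : ℂ) := by
      intro n y
      simp [hθ, abs_norm]
    -- bound on differences
    have hθf : ∀ n m N : ℕ, N ≤ n → N ≤ m →
        ‖(θ n - θ m) * f‖ ≤ Real.sqrt (1/(N+1)) := by
      intro n m N hn hm
      apply hC0 _ _ (Real.sqrt_nonneg _)
      intro y
      have hy : ((θ n - θ m) * f) y
          = ((Real.sqrt ‖f y‖ / (‖f y‖ + 1/(n+1))
              - Real.sqrt ‖f y‖ / (‖f y‖ + 1/(m+1)) : ℝ) : ℂ) * f y := by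
        simp only [ZeroAtInftyContinuousMap.coe_mul, ZeroAtInftyContinuousMap.coe_sub,
          Pi.mul_apply, Pi.sub_apply, hθy]
        push_cast
        ring
      rw [hy, norm_mul, Complex.norm_real, Real.norm_eq_abs]
      have hNn : (1:ℝ)/(n+1) ≤ 1/(N+1) := by
        apply one_div_le_one_div_of_le (by positivity)
        have : (N:ℝ) ≤ n := Nat.cast_le.mpr hn
        linarith
      have hNm : (1:ℝ)/(m+1) ≤ 1/(N+1) := by
        apply one_div_le_one_div_of_le (by positivity)
        have : (N:ℝ) ≤ m := Nat.cast_le.mpr hm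
        linarith
      rcases le_total ((1:ℝ)/(n+1)) ((1:ℝ)/(m+1)) with hc | hc
      · exact le_trans (sqrtAux1 (norm_nonneg _) (hεpos n) (hεpos m) hc)
          (Real.sqrt_le_sqrt hNm)
      · rw [abs_sub_comm]
        exact le_trans (sqrtAux1 (norm_nonneg _) (hεpos m) (hεpos n) hc)
          (Real.sqrt_le_sqrt hNn)
    -- Cauchy sequence
    set seq : ℕ → A := fun n => (μA (θ n)).fst a with hseq
    have hdist : ∀ n m N : ℕ, N ≤ n → N ≤ m →
        dist (seq n) (seq m) ≤ Real.sqrt (1/(N+1)) * ‖c‖ := by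
      intro n m N hn hm
      rw [dist_eq_norm]
      have e1 : seq n - seq m = (μA (θ n - θ m)).fst a := (hsubA _ _ _).symm
      rw [e1, ← hnι, hmod, ← hfc, ← hmulB]
      exact le_trans (happB _ _)
        (mul_le_mul_of_nonneg_right (hθf n m N hn hm) (norm_nonneg c))
    have htend0 : Tendsto (fun N : ℕ => Real.sqrt (1/(N+1)) * ‖c‖) atTop (nhds 0) := by
      have h0 : Tendsto (fun N : ℕ => (1:ℝ)/(N+1)) atTop (nhds 0) :=
        tendsto_one_div_add_atTop_nhds_zero_nat
      have h1 : Tendsto (fun N : ℕ => Real.sqrt (1/(N+1))) atTop (nhds 0) := by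
        rw [show (0:ℝ) = Real.sqrt 0 by simp]
        exact (Real.continuous_sqrt.tendsto 0).comp h0
      simpa using h1.mul_const ‖c‖
    have hcauchy : CauchySeq seq := cauchySeq_of_le_tendsto_0 _ hdist htend0
    obtain ⟨a', ha'⟩ := cauchySeq_tendsto_of_complete hcauchy
    -- conclude
    have l1 : Tendsto (fun n => (μA (h * θ n)).fst a) atTop (nhds ((μA h).fst a')) := by
      have := ((μA h).fst.continuous.tendsto a').comp ha'
      exact this.congr (fun n => (hmulA h (θ n) a).symm)
    have l3 : Tendsto (fun n => (μA (h * θ n)).fst a) atTop (nhds a) := by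
      rw [← tendsto_sub_nhds_zero_iff]
      have hbnd : ∀ n : ℕ, ‖(μA (h * θ n)).fst a - a‖ ≤ (1/(n+1)) * ‖c‖ := by
        intro n
        rw [norm_sub_rev, ← hnι, map_sub, hmod, ← hfc, ← hmulB, ← hsubB]
        apply le_trans (happB _ _)
        apply mul_le_mul_of_nonneg_right _ (norm_nonneg c)
        apply hC0 _ _ (hεpos n).le
        intro y
        have hy : (f - h * θ n * f) y
            = ((1 - Real.sqrt ‖f y‖ * (Real.sqrt ‖f y‖ / (‖f y‖ + 1/(n+1))) : ℝ) : ℂ)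
              * f y := by
          simp only [ZeroAtInftyContinuousMap.coe_mul, ZeroAtInftyContinuousMap.coe_sub,
            Pi.mul_apply, Pi.sub_apply, hθy, hh, nComp_apply]
          push_cast
          ring
        rw [hy, norm_mul, Complex.norm_real, Real.norm_eq_abs]
        exact sqrtAux2 (norm_nonneg _) (hεpos n)
      have h0 : Tendsto (fun n : ℕ => (1:ℝ)/(n+1)) atTop (nhds 0) :=
        tendsto_one_div_add_atTop_nhds_zero_nat
      exact squeeze_zero_norm hbnd (by simpa using h0.mul_const ‖c‖)
    have hfin : (μA h).fst a' = a := tendsto_nhds_unique l1 l3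
    exact ⟨h, a', by simp [hh, hfx], hfin⟩
  -- part 1
  have part1 : ∀ x : X, ι '' Ix x = Jx x ∩ Set.range ι := by
    intro x
    apply Set.Subset.antisymm
    · rintro _ ⟨z, ⟨g, a0, hgx, hga⟩, rfl⟩
      exact ⟨⟨g, ι a0, hgx, by rw [← hmod, hga]⟩, ⟨z, rfl⟩⟩
    · rintro b ⟨hbJ, ⟨a0, rfl⟩⟩
      exact ⟨a0, hback x a0 hbJ, rfl⟩
  -- part 2
  have part2 : ∀ (x : X) (a : A), infDist a (Ix x) = infDist (ι a) (Jx x) := by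
    intro x a
    apply le_antisymm
    · -- infDist a (Ix x) ≤ infDist (ι a) (Jx x)
      apply le_of_forall_pos_le_add
      intro ε hε
      obtain ⟨z, hzJ, hdz⟩ := (Metric.infDist_lt_iff (hJne x)).mp
        (lt_add_of_pos_right (infDist (ι a) (Jx x)) (half_pos hε))
      obtain ⟨f', c', hf'x, hz'⟩ := hzJ
      set δ : ℝ := (ε/2)/(‖c'‖ + 1) with hδdef
      have hδpos : 0 < δ := by positivity
      set e : C₀(X, ℂ) := nComp f' (fun s => min (s/δ) 1)
        (Continuous.min (continuous_id.div_const δ) continuous_const) (by simp) with he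
      set g : C₀(X, ℂ) := nComp f' (fun s => Real.sqrt (min (s/δ) 1))
        (Real.continuous_sqrt.comp (Continuous.min (continuous_id.div_const δ) continuous_const))
        (by simp) with hg
      have heg : e = star g * g := by
        ext y
        simp only [he, hg, nComp_apply, ZeroAtInftyContinuousMap.coe_mul, Pi.mul_apply,
          ZeroAtInftyContinuousMap.coe_star, Pi.star_apply, Complex.star_def,
          Complex.conj_ofReal]
        rw [← Complex.ofReal_mul, Real.mul_self_sqrt
          (le_min (div_nonneg (norm_nonneg _) hδpos.le) zero_le_one)]
      have henorm : ‖e‖ ≤ 1 := by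
        apply hC0 _ _ zero_le_one
        intro y
        rw [he, nComp_apply, Complex.norm_real, Real.norm_eq_abs, abs_le]
        constructor
        · have : (0:ℝ) ≤ min (‖f' y‖/δ) 1 :=
            le_min (div_nonneg (norm_nonneg _) hδpos.le) zero_le_one
          linarith
        · exact min_le_right _ _
      have hone : ‖(1 : 𝓜(ℂ, B)) - μB e‖ ≤ 1 := by
        rw [heg, map_mul, map_star]
        apply normOneSub
        rw [← map_star, ← map_mul, ← heg]
        exact le_trans (NonUnitalStarAlgHom.norm_apply_le μB e) henorm
      have hexmem : (μA e).fst a ∈ Ix x := by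
        refine ⟨e, a, ?_, rfl⟩
        simp [he, hf'x]
      have hsplit : ι a - (μB e).fst (ι a)
          = ((1 : 𝓜(ℂ, B)) - μB e).fst (ι a - z) + (z - (μB e).fst z) := by
        rw [DoubleCentralizer.sub_fst, DoubleCentralizer.one_fst, ContinuousLinearMap.sub_apply,
          ContinuousLinearMap.one_apply, map_sub]
        abel
      have hterm2 : ‖z - (μB e).fst z‖ ≤ ε/2 := by
        have e2 : z - (μB e).fst z = (μB (f' - e * f')).fst c' := by
          rw [hsubB, hmulB, hz']
        rw [e2]
        apply le_trans (happB _ _)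
        have hb : ‖f' - e * f'‖ ≤ δ := by
          apply hC0 _ _ hδpos.le
          intro y
          have hy : (f' - e * f') y
              = ((1 - min (‖f' y‖/δ) 1 : ℝ) : ℂ) * f' y := by
            simp only [ZeroAtInftyContinuousMap.coe_mul, ZeroAtInftyContinuousMap.coe_sub,
              Pi.mul_apply, Pi.sub_apply, he, nComp_apply]
            push_cast
            ring
          rw [hy, norm_mul, Complex.norm_real, Real.norm_eq_abs]
          exact minAux (norm_nonneg _) hδpos
        calc ‖f' - e * f'‖ * ‖c'‖ ≤ δ * ‖c'‖ :=
              mul_le_mul_of_nonneg_right hb (norm_nonneg _)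
          _ ≤ ε/2 := by
              rw [hδdef]
              rw [div_mul_eq_mul_div, div_le_iff₀ (by positivity)]
              nlinarith [norm_nonneg c', half_pos hε]
      have hterm1 : ‖((1 : 𝓜(ℂ, B)) - μB e).fst (ι a - z)‖ ≤ ‖ι a - z‖ := by
        calc ‖((1 : 𝓜(ℂ, B)) - μB e).fst (ι a - z)‖
            ≤ ‖((1 : 𝓜(ℂ, B)) - μB e).fst‖ * ‖ι a - z‖ :=
              ContinuousLinearMap.le_opNorm _ _
          _ ≤ 1 * ‖ι a - z‖ := by
              rw [DoubleCentralizer.norm_fst]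
              exact mul_le_mul_of_nonneg_right hone (norm_nonneg _)
          _ = ‖ι a - z‖ := one_mul _
      calc infDist a (Ix x) ≤ dist a ((μA e).fst a) := infDist_le_dist_of_mem hexmem
        _ = ‖ι a - (μB e).fst (ι a)‖ := by
            rw [dist_eq_norm, ← hnι, map_sub, hmod]
        _ ≤ ‖((1 : 𝓜(ℂ, B)) - μB e).fst (ι a - z)‖ + ‖z - (μB e).fst z‖ := by
            rw [hsplit]; exact norm_add_le _ _
        _ ≤ ‖ι a - z‖ + ε/2 := add_le_add hterm1 hterm2
        _ ≤ infDist (ι a) (Jx x) + ε := by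
            rw [← dist_eq_norm]
            linarith
    · -- infDist (ι a) (Jx x) ≤ infDist a (Ix x)
      by_contra hlt
      push_neg at hlt
      obtain ⟨z, hzI, hdz⟩ := (Metric.infDist_lt_iff (hIne x)).mp hlt
      obtain ⟨fz, az, hfz, haz⟩ := hzI
      have hmem : ι z ∈ Jx x := ⟨fz, ι az, hfz, by rw [← hmod, haz]⟩
      have h1 : infDist (ι a) (Jx x) ≤ dist (ι a) (ι z) := infDist_le_dist_of_mem hmem
      have h2 : dist (ι a) (ι z) = dist a z := by
        rw [dist_eq_norm, dist_eq_norm, ← map_sub, hnι]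
      linarith
  refine ⟨part1, part2, ?_⟩
  intro hB a
  obtain ⟨g, hg⟩ := hB (ι a)
  exact ⟨g, fun x => by rw [hg x, ← part2 x a]⟩

end Main
end
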